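/- arXiv:math/0703921 — 2 statements merged into one kernel-verified Lean document; each statement's English description precedes it below -/
import Mathlib

section
/- Let k ≥ 1 and ℓ ≥ 0 be integers, let i ≥ 0 be an integer with ℓ ≤ i·k, and let G = (V,E) be a (k,ℓ)-sparse hypergraph. Let V₁, V₂ ⊆ V satisfy |E(V₁)| = k|V₁| − ℓ and |E(V₂)| = k|V₂| − ℓ, and suppose |V₁ ∩ V₂| ≥ i. Then |E(V₁ ∪ V₂)| = k|V₁ ∪ V₂| − ℓ and |E(V₁ ∩ V₂)| = k|V₁ ∩ V₂| − ℓ; that is, both the union and the intersection of the two blocks induce tight subhypergraphs. -/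
/-- The number of edges of the multiset `E` spanned by the vertex set `W`. -/
def spanCount {V : Type*} [DecidableEq V] (E : Multiset (Finset V)) (W : Finset V) : ℕ :=
  (E.filter fun e => e ⊆ W).card

/-- A hypergraph with edge multiset `E` is `(k,ℓ)`-sparse if every vertex subset spanning
at least one edge spans at most `k|W| - ℓ` edges. -/
def Sparse {V : Type*} [DecidableEq V] (k l : ℕ) (E : Multiset (Finset V)) : Prop :=
  ∀ W : Finset V, 1 ≤ spanCount E W → spanCount E W + l ≤ k * W.card

/-! Two tight sets overlapping in at least `i` vertices: the span count is supermodular and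
`k|·|` is modular, so the excesses of `W₁ ∪ W₂` and `W₁ ∩ W₂` add up to at least those of the
blocks. Sparsity caps both at zero, also when one of them spans no edge, since then
`ℓ ≤ i·k ≤ k|W₁ ∩ W₂|` does the job. Hence both are tight. -/

section

variable {V : Type*} [DecidableEq V]

theorem spanCount_add_le_spanCount_union_add_spanCount_inter (E : Multiset (Finset V))
    (W₁ W₂ : Finset V) :
    spanCount E W₁ + spanCount E W₂ ≤ spanCount E (W₁ ∪ W₂) + spanCount E (W₁ ∩ W₂) := by
  unfold spanCount
  rw [← Multiset.card_add, ← Multiset.card_add, Multiset.filter_add_filter]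
  refine Multiset.card_le_card (add_le_add ?_ ?_) <;>
    refine Multiset.monotone_filter_right _ fun e he => ?_
  · rcases he with h | h
    · exact h.trans Finset.subset_union_left
    · exact h.trans Finset.subset_union_right
  · exact Finset.subset_inter he.1 he.2

theorem Sparse.spanCount_add_le {k l : ℕ} {E : Multiset (Finset V)} (hsp : Sparse k l E)
    {W : Finset V} (hW : l ≤ k * W.card) : spanCount E W + l ≤ k * W.card := by
  rcases Nat.eq_zero_or_pos (spanCount E W) with h | h
  · rwa [h, Nat.zero_add]
  · exact hsp W h

end

theorem stmt_5_general {V : Type*} [DecidableEq V] (k l i : ℕ) (hl : l ≤ i * k)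
    (E : Multiset (Finset V)) (hsp : Sparse k l E)
    (W₁ W₂ : Finset V)
    (h₁ : spanCount E W₁ + l = k * W₁.card)
    (h₂ : spanCount E W₂ + l = k * W₂.card)
    (hcap : i ≤ (W₁ ∩ W₂).card) :
    spanCount E (W₁ ∪ W₂) + l = k * (W₁ ∪ W₂).card ∧
      spanCount E (W₁ ∩ W₂) + l = k * (W₁ ∩ W₂).card := by
  have hinter : l ≤ k * (W₁ ∩ W₂).card :=
    hl.trans ((Nat.mul_le_mul_right k hcap).trans_eq (Nat.mul_comm _ _))
  have hunion : l ≤ k * (W₁ ∪ W₂).card :=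
    hinter.trans (Nat.mul_le_mul_left k (Finset.card_le_card Finset.inter_subset_union))
  have hsuper := spanCount_add_le_spanCount_union_add_spanCount_inter E W₁ W₂
  have hmod : k * (W₁ ∪ W₂).card + k * (W₁ ∩ W₂).card = k * W₁.card + k * W₂.card := by
    rw [← Nat.mul_add, ← Nat.mul_add, Finset.card_union_add_card_inter]
  have := hsp.spanCount_add_le hunion
  have := hsp.spanCount_add_le hinter
  omega

/-- Block intersection and union: if `ℓ ≤ i·k` and two blocks of a `(k,ℓ)`-sparse
hypergraph intersect in at least `i` vertices, then their union and intersection again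
induce tight subhypergraphs. -/
theorem stmt_5 {V : Type*} [DecidableEq V] (k l i : ℕ) (hk : 1 ≤ k) (hl : l ≤ i * k)
    (E : Multiset (Finset V)) (hne : ∀ e ∈ E, e.Nonempty) (hsp : Sparse k l E)
    (W₁ W₂ : Finset V)
    (h₁ : spanCount E W₁ + l = k * W₁.card)
    (h₂ : spanCount E W₂ + l = k * W₂.card)
    (hcap : i ≤ (W₁ ∩ W₂).card) :
    spanCount E (W₁ ∪ W₂) + l = k * (W₁ ∪ W₂).card ∧
      spanCount E (W₁ ∩ W₂) + l = k * (W₁ ∩ W₂).card :=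
  stmt_5_general k l i hl E hsp W₁ W₂ h₁ h₂ hcap
end

section
/- Let k ≥ 1 be an integer and let G = (V,E) be a (k,0)-sparse hypergraph. Then G has at most one component: any two components of G are equal. -/
/-- A block of a sparse hypergraph: a vertex subset spanning at least one edge and
spanning exactly `k|W| - ℓ` edges. -/
def IsBlock {V : Type*} [DecidableEq V] (k l : ℕ) (E : Multiset (Finset V)) (W : Finset V) :
    Prop :=
  1 ≤ spanCount E W ∧ spanCount E W + l = k * W.card

/-- A component: an inclusion-maximal block. -/
def IsComponent {V : Type*} [DecidableEq V] (k l : ℕ) (E : Multiset (Finset V))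
    (W : Finset V) : Prop :=
  IsBlock k l E W ∧ ∀ W' : Finset V, IsBlock k l E W' → W ⊆ W' → W' = W

section Span

variable {V : Type*} [DecidableEq V] (E : Multiset (Finset V))

theorem spanCount_mono {W W' : Finset V} (h : W ⊆ W') : spanCount E W ≤ spanCount E W' :=
  Multiset.card_le_card <| Multiset.monotone_filter_right E fun _ he => he.trans h

theorem spanCount_add_spanCount_le (A B : Finset V) :
    spanCount E A + spanCount E B ≤ spanCount E (A ∪ B) + spanCount E (A ∩ B) := by
  have hsplit : spanCount E A + spanCount E B =
      (E.filter fun e => e ⊆ A ∨ e ⊆ B).card + (E.filter fun e => e ⊆ A ∧ e ⊆ B).card := by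
    rw [spanCount, spanCount, ← Multiset.card_add, ← Multiset.card_add,
      Multiset.filter_add_filter]
  have hunion : (E.filter fun e => e ⊆ A ∨ e ⊆ B).card ≤ spanCount E (A ∪ B) :=
    Multiset.card_le_card <| Multiset.monotone_filter_right E fun _ he =>
      he.elim (·.trans Finset.subset_union_left) (·.trans Finset.subset_union_right)
  have hinter : (E.filter fun e => e ⊆ A ∧ e ⊆ B) = E.filter fun e => e ⊆ A ∩ B :=
    Multiset.filter_congr fun _ _ => Finset.subset_inter_iff.symm
  rw [hsplit, hinter, ← spanCount]
  omega

variable {E}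

theorem Sparse.spanCount_le {k : ℕ} (hsp : Sparse k 0 E) (W : Finset V) :
    spanCount E W ≤ k * W.card := by
  rcases Nat.eq_zero_or_pos (spanCount E W) with h | h
  · simp [h]
  · simpa using hsp W h

/-- With `ℓ = 0` the sparsity bound also holds on sets spanning no edge, so the union of two blocks
is tight by supermodularity of `spanCount`, whatever their intersection spans. -/
theorem IsBlock.union {k : ℕ} (hsp : Sparse k 0 E) {A B : Finset V} (hA : IsBlock k 0 E A)
    (hB : IsBlock k 0 E B) : IsBlock k 0 E (A ∪ B) := by
  have hspan : 1 ≤ spanCount E (A ∪ B) :=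
    hA.1.trans (spanCount_mono E Finset.subset_union_left)
  have hsuper := spanCount_add_spanCount_le E A B
  have hinter := hsp.spanCount_le (A ∩ B)
  have hunion := hsp.spanCount_le (A ∪ B)
  have hcard : k * A.card + k * B.card = k * (A ∪ B).card + k * (A ∩ B).card := by
    rw [← Nat.mul_add, ← Nat.mul_add, Finset.card_union_add_card_inter]
  have hAtight := hA.2
  have hBtight := hB.2
  exact ⟨hspan, by omega⟩

end Span

theorem stmt_8_general {V : Type*} [DecidableEq V] (k : ℕ)
    (E : Multiset (Finset V)) (hsp : Sparse k 0 E)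
    (C₁ C₂ : Finset V) (hC₁ : IsComponent k 0 E C₁) (hC₂ : IsComponent k 0 E C₂) :
    C₁ = C₂ := by
  have hunion := hC₁.1.union hsp hC₂.1
  calc C₁ = C₁ ∪ C₂ := (hC₁.2 _ hunion Finset.subset_union_left).symm
    _ = C₂ := hC₂.2 _ hunion Finset.subset_union_right

/-- A `(k,0)`-sparse hypergraph has at most one component. -/
theorem stmt_8 {V : Type*} [DecidableEq V] (k : ℕ) (hk : 1 ≤ k)
    (E : Multiset (Finset V)) (hne : ∀ e ∈ E, e.Nonempty) (hsp : Sparse k 0 E)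
    (C₁ C₂ : Finset V) (hC₁ : IsComponent k 0 E C₁) (hC₂ : IsComponent k 0 E C₂) :
    C₁ = C₂ :=
  stmt_8_general k E hsp C₁ C₂ hC₁ hC₂
end
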